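/- Let T be a rooted tree obtained from a tree T₀ (in which every internal vertex has one or two children) by attaching a new root r'' as the parent of the root r of T₀. For each vertex v of T₀, let s_v be the number of leaves of T₀ below v (s_v = 1 for leaves), and let n = s_r. Define NAND : V(T₀) → {0,1} by NAND(v) = 0 for every leaf v, and, for internal v, NAND(v) = 0 if and only if NAND(c) = 1 for every child c of v. For a vertex v of T₀ with parent p, let h_{pv} = (s_v/s_p)^{1/4} when p ≠ r'', and let h_{r''r} be an arbitrary positive real. Let σ_-(v) = max over simple paths ξ from v down to a leaf of Σ_{w∈ξ} 1/√(s_w), and σ_- = σ_-(r). Let E be a real number with 0 < E ≤ 1/√(8 σ_-³ n), and let a : V(T) → ℝ satisfy, for every vertex v ≠ r'' with parent p, the equation E a_v = h_{pv} a_p + Σ_c h_{vc} a_c (sum over the children c of v; empty for leaves). For v ≠ r'' define γ_v = 4 σ_-² s_v σ_-(v) and y_v = √(s_v) σ_-(v) / (1 − γ_v E²). Then for every vertex v ≠ r'' with parent p, either a_v = a_p = 0, or: if NAND(v) = 0 then a_v ≠ 0 and 0 < (h_{pv} a_p)/a_v ≤ y_v E, and if NAND(v) = 1 then a_p ≠ 0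 and 0 > a_v/(h_{pv} a_p) ≥ −y_v E. -/
import Mathlib


noncomputable section

set_option maxHeartbeats 1600000


section Helpers

-- ratio extraction lemmas (pure real arithmetic)
lemma ratio_true_prod (w K y E : ℝ) (h1 : w/K < 0) (h2 : -(y*E) ≤ w/K) (hK : K ≠ 0) :
    w*K < 0 ∧ -(y*E)*(K*K) ≤ w*K := by
  have hK2 : 0 < K*K := mul_self_pos.mpr hK
  have e : w/K*(K*K) = w*K := by field_simp
  constructor
  · nlinarith [mul_lt_mul_of_pos_right h1 hK2]
  · nlinarith [mul_le_mul_of_nonneg_right h2 hK2.le]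

lemma ratio_false_prod (w K y E : ℝ) (hw : w ≠ 0) (h1 : 0 < K/w) (h2 : K/w ≤ y*E) :
    0 < K*w ∧ K*K ≤ (K*w)*(y*E) := by
  have hw2 : 0 < w*w := mul_self_pos.mpr hw
  have e : K/w*(w*w) = K*w := by field_simp
  have h1' : 0 < K*w := by nlinarith [mul_pos h1 hw2]
  have h3 : K*w ≤ y*E*(w*w) := by nlinarith [mul_le_mul_of_nonneg_right h2 hw2.le]
  refine ⟨h1', ?_⟩
  nlinarith [mul_le_mul_of_nonneg_left h3 h1'.le, hw2]

-- final conversion lemmas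
lemma loc_false_concl (P a yE : ℝ) (ha : a ≠ 0) (h1 : 0 < P*a) (h2 : P*a ≤ yE*(a*a)) :
    0 < P/a ∧ P/a ≤ yE := by
  have ha2 : 0 < a*a := mul_self_pos.mpr ha
  have e : P/a = (P*a)/(a*a) := by field_simp
  rw [e]
  exact ⟨div_pos h1 ha2, (div_le_iff₀ ha2).mpr (by linarith)⟩

lemma loc_true_concl (P a yE : ℝ) (ha : a ≠ 0) (hy : 0 < yE) (h : a*a ≤ -(P*a)*yE) :
    P ≠ 0 ∧ a/P < 0 ∧ -yE ≤ a/P := by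
  have ha2 : 0 < a*a := mul_self_pos.mpr ha
  have hPa : P*a < 0 := by nlinarith
  have hP : P ≠ 0 := by
    intro h0; rw [h0] at hPa; simp at hPa
  have hP2 : 0 < P*P := mul_self_pos.mpr hP
  have e : a/P = (a*P)/(P*P) := by field_simp
  have h5 : (-(P*a))*((-(P*a)) - yE*(P*P)) ≤ 0 := by
    nlinarith [mul_le_mul_of_nonneg_right h (mul_self_nonneg P)]
  have h6 : -(P*a) ≤ yE*(P*P) := by nlinarith [h5, hPa]
  refine ⟨hP, ?_, ?_⟩
  · rw [e]; apply div_neg_of_neg_of_pos (by linarith) hP2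
  · rw [e, le_div_iff₀ hP2]; linarith

lemma key0 (σ E S Sl Sr sl sr sv σl σr m σv Dl Dr Dv : ℝ)
    (hsl : sl = Sl*Sl) (hsr : sr = Sr*Sr) (hsv2 : sv = S*S) (hs2 : sv = sl + sr)
    (hS : 0 < S) (hSl : 0 < Sl) (hSr : 0 ≤ Sr)
    (hσl0 : 0 ≤ σl) (hσr0 : 0 ≤ σr) (hml : σl ≤ m) (hmr : σr ≤ m)
    (hσv : S*σv = 1 + S*m) (hσlv : σl ≤ σv) (hσrv : σr ≤ σv)
    (hDleq : Dl = 1 - 4*σ^2*sl*σl*E^2) (hDreq : Dr = 1 - 4*σ^2*sr*σr*E^2)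
    (hDveq : Dv = 1 - 4*σ^2*sv*σv*E^2)
    (hDl : 1/2 ≤ Dl) (hDr : 1/2 ≤ Dr) (hDv : 1/2 ≤ Dv) :
    1 + (Sl/S) * (Sl*σl/Dl) + (Sr/S) * (Sr*σr/Dr) ≤ S*σv/Dv := by
  have hDl0 : (0:ℝ) < Dl := by linarith
  have hDr0 : (0:ℝ) < Dr := by linarith
  have hDv0 : (0:ℝ) < Dv := by linarith
  have hσv0 : 0 ≤ σv := le_trans hσl0 hσlv
  have hσE : (0:ℝ) ≤ 4*σ^2*E^2 := by positivity
  have hSS : S*S = Sl*Sl + Sr*Sr := by linarith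
  have hsvσ : sl*σl ≤ sv*σv := by
    nlinarith [mul_nonneg (mul_self_nonneg Sl) (sub_nonneg.mpr hσlv),
      mul_nonneg (mul_self_nonneg Sr) hσv0]
  have hsvσr : sr*σr ≤ sv*σv := by
    nlinarith [mul_nonneg (mul_self_nonneg Sr) (sub_nonneg.mpr hσrv),
      mul_nonneg (mul_self_nonneg Sl) hσv0]
  have hDvDl : Dv ≤ Dl := by
    rw [hDleq, hDveq]
    nlinarith [mul_nonneg hσE (sub_nonneg.mpr hsvσ)]
  have hDvDr : Dv ≤ Dr := by
    rw [hDreq, hDveq]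
    nlinarith [mul_nonneg hσE (sub_nonneg.mpr hsvσr)]
  have hsv0 : 0 ≤ sv := by nlinarith [mul_self_nonneg S]
  have hDv1 : Dv ≤ 1 := by
    rw [hDveq]
    nlinarith [mul_nonneg hσE (mul_nonneg hsv0 hσv0)]
  rw [← sub_nonneg]
  have hexp : S*σv/Dv - (1 + (Sl/S) * (Sl*σl/Dl) + (Sr/S) * (Sr*σr/Dr))
      = (S*S*σv*(Dl*Dr) - (S*(Dl*Dr)*Dv + Sl*Sl*σl*Dr*Dv + Sr*Sr*σr*Dl*Dv))
        / (S*(Dl*(Dr*Dv))) := by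
    field_simp
  rw [hexp]
  apply div_nonneg _ (by positivity)
  have h1a := mul_le_mul_of_nonneg_right (mul_le_mul_of_nonneg_right
    (mul_le_mul_of_nonneg_left hml (mul_self_nonneg Sl)) hDr0.le) hDv0.le
  have hm0 : 0 ≤ m := le_trans hσl0 hml
  have h1b := mul_le_mul_of_nonneg_left hDvDl
    (mul_nonneg (mul_nonneg (mul_self_nonneg Sl) hm0) hDr0.le : (0:ℝ) ≤ Sl*Sl*m*Dr)
  have h2a := mul_le_mul_of_nonneg_right (mul_le_mul_of_nonneg_right
    (mul_le_mul_of_nonneg_left hmr (mul_self_nonneg Sr)) hDl0.le) hDv0.le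
  have h2b := mul_le_mul_of_nonneg_left hDvDr
    (mul_nonneg (mul_nonneg (mul_self_nonneg Sr) hm0) hDl0.le : (0:ℝ) ≤ Sr*Sr*m*Dl)
  have h3 := mul_le_mul_of_nonneg_left hDv1
    (by positivity : (0:ℝ) ≤ S*(Dl*Dr))
  have e1 : S*S*σv*(Dl*Dr) = S*(Dl*Dr) + Sl*Sl*m*(Dl*Dr) + Sr*Sr*m*(Dl*Dr) := by
    linear_combination (S*(Dl*Dr))*hσv + (m*(Dl*Dr))*hSS
  nlinarith [h1a, h1b, h2a, h2b, h3, e1]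

lemma key1 (σ E S Sl Sr sl sr sv σl σr σv Dl Dr Dv : ℝ)
    (hσ : 1 ≤ σ) (hE : 0 < E) (m : ℝ)
    (hsl : sl = Sl*Sl) (hsr : sr = Sr*Sr) (hsv2 : sv = S*S) (hs2 : sv = sl + sr)
    (hS : 0 < S) (hSl : 0 < Sl) (hSr : 0 ≤ Sr)
    (hσl0 : 0 < σl) (hσr0 : 0 ≤ σr) (hml : σl ≤ m)
    (hσv : S*σv = 1 + S*m) (hσlv : σl ≤ σv) (hσrσ : σr ≤ σ)
    (hDleq : Dl = 1 - 4*σ^2*sl*σl*E^2) (hDreq : Dr = 1 - 4*σ^2*sr*σr*E^2)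
    (hDveq : Dv = 1 - 4*σ^2*sv*σv*E^2)
    (hDl : 1/2 ≤ Dl) (hDr : 1/2 ≤ Dr) (hDv : 1/2 ≤ Dv)
    (hE1 : sv*σl*σv*E^2 ≤ 1) :
    (Sl*σl/Dl)*(1 + (S*σv/Dv)*E^2*(1 + (Sr/S)*(Sr*σr/Dr)))
      ≤ (S*σv/Dv)*(Sl/S) := by
  have hDl0 : (0:ℝ) < Dl := by linarith
  have hDr0 : (0:ℝ) < Dr := by linarith
  have hDv0 : (0:ℝ) < Dv := by linarith
  have hσv0 : 0 < σv := lt_of_lt_of_le hσl0 hσlv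
  have hSd : 1 ≤ S*(σv - σl) := by
    have := mul_le_mul_of_nonneg_left hml hS.le
    nlinarith
  have hb1 : 0 ≤ (σv - σl) - S*σv*σl*E^2 := by
    rw [hsv2] at hE1
    have hmain : S*0 ≤ S*((σv - σl) - S*σv*σl*E^2) := by nlinarith [hSd, hE1]
    exact le_of_mul_le_mul_left (by linarith) hS
  have hb2 : 0 ≤ 4*σ^2*Dr - σr := by
    nlinarith [mul_nonneg (by positivity : (0:ℝ) ≤ 4*σ^2) (by linarith : (0:ℝ) ≤ Dr - 1/2),
      mul_nonneg (by linarith : (0:ℝ) ≤ σ) (by linarith : (0:ℝ) ≤ 2*σ - 1)]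
  rw [← sub_nonneg]
  have hexp : (S*σv/Dv)*(Sl/S) - (Sl*σl/Dl)*(1 + (S*σv/Dv)*E^2*(1 + (Sr/S)*(Sr*σr/Dr)))
      = (Sl*(σv*(Dl*Dr) - σl*(Dv*Dr) - S*σv*σl*E^2*Dr - Sr*Sr*σr*σv*σl*E^2))
        / (Dl*(Dv*Dr)) := by
    field_simp
    ring
  rw [hexp]
  apply div_nonneg _ (by positivity)
  apply mul_nonneg hSl.le
  rw [hDleq, hDveq, hs2, hsr]
  nlinarith [mul_nonneg hDr0.le hb1,
    mul_nonneg (by positivity : (0:ℝ) ≤ Sr*Sr*σv*σl*E^2) hb2]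

-- core lemma, nand(v) = false : both children (possibly degenerate) are "true" children
lemma core_false (σ E S Sl Sr sl sr sv σl σr m σv Dl Dr Dv a b c P Kl Kr : ℝ)
    (hE : 0 < E)
    (hsl : sl = Sl*Sl) (hsr : sr = Sr*Sr) (hsv2 : sv = S*S) (hs2 : sv = sl + sr)
    (hS : 0 < S) (hSl : 0 < Sl) (hSr : 0 ≤ Sr)
    (hσl0 : 0 ≤ σl) (hσr0 : 0 ≤ σr) (hml : σl ≤ m) (hmr : σr ≤ m)
    (hσv : S*σv = 1 + S*m) (hσlv : σl ≤ σv) (hσrv : σr ≤ σv)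
    (hDleq : Dl = 1 - 4*σ^2*sl*σl*E^2) (hDreq : Dr = 1 - 4*σ^2*sr*σr*E^2)
    (hDveq : Dv = 1 - 4*σ^2*sv*σv*E^2)
    (hDl : 1/2 ≤ Dl) (hDr : 1/2 ≤ Dr) (hDv : 1/2 ≤ Dv)
    (ha2 : 0 < a*a)
    (hKl2 : Kl*Kl = (Sl/S)*(a*a)) (hKr2 : Kr*Kr = (Sr/S)*(a*a))
    (hPa : P*a = E*(a*a) - b*Kl - c*Kr)
    (hbl : b*Kl ≤ 0) (hcl : c*Kr ≤ 0)
    (hbl2 : -(b*Kl) ≤ ((Sl*σl/Dl)*E)*(Kl*Kl))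
    (hcr2 : -(c*Kr) ≤ ((Sr*σr/Dr)*E)*(Kr*Kr)) :
    0 < P*a ∧ P*a ≤ ((S*σv/Dv)*E)*(a*a) := by
  have k0 := key0 σ E S Sl Sr sl sr sv σl σr m σv Dl Dr Dv hsl hsr hsv2 hs2 hS hSl hSr
    hσl0 hσr0 hml hmr hσv hσlv hσrv hDleq hDreq hDveq hDl hDr hDv
  constructor
  · nlinarith [mul_pos hE ha2]
  · rw [hKl2] at hbl2
    rw [hKr2] at hcr2
    nlinarith [mul_le_mul_of_nonneg_left k0 (le_of_lt (mul_pos hE ha2))]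

-- core lemma, nand(v) = true : b is the designated "false" child
lemma core_true (σ E S Sl Sr sl sr sv σl σr m σv Dl Dr Dv a b c P Kl Kr : ℝ)
    (hσ : 1 ≤ σ) (hE : 0 < E)
    (hsl : sl = Sl*Sl) (hsr : sr = Sr*Sr) (hsv2 : sv = S*S) (hs2 : sv = sl + sr)
    (hS : 0 < S) (hSl : 0 < Sl) (hSr : 0 ≤ Sr)
    (hσl0 : 0 < σl) (hσr0 : 0 ≤ σr) (hml : σl ≤ m)
    (hσv : S*σv = 1 + S*m) (hσlv : σl ≤ σv) (hσrσ : σr ≤ σ)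
    (hDleq : Dl = 1 - 4*σ^2*sl*σl*E^2) (hDreq : Dr = 1 - 4*σ^2*sr*σr*E^2)
    (hDveq : Dv = 1 - 4*σ^2*sv*σv*E^2)
    (hDl : 1/2 ≤ Dl) (hDr : 1/2 ≤ Dr) (hDv : 1/2 ≤ Dv)
    (hE1 : sv*σl*σv*E^2 ≤ 1) (hσv0 : 0 < σv)
    (ha2 : 0 < a*a)
    (hKl2 : Kl*Kl = (Sl/S)*(a*a)) (hKr2 : Kr*Kr = (Sr/S)*(a*a))
    (hPa : P*a = E*(a*a) - b*Kl - c*Kr)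
    (hbl : 0 < Kl*b)
    (hbl2 : Kl*Kl ≤ (Kl*b)*((Sl*σl/Dl)*E))
    (hcr2 : -(c*Kr) ≤ ((Sr*σr/Dr)*E)*(Kr*Kr)) :
    a*a ≤ -(P*a)*((S*σv/Dv)*E) := by
  have hDl0 : (0:ℝ) < Dl := by linarith
  have hDr0 : (0:ℝ) < Dr := by linarith
  have hDv0 : (0:ℝ) < Dv := by linarith
  have k1 := key1 σ E S Sl Sr sl sr sv σl σr σv Dl Dr Dv hσ hE m hsl hsr hsv2 hs2 hS hSl hSr
    hσl0 hσr0 hml hσv hσlv hσrσ hDleq hDreq hDveq hDl hDr hDv hE1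
  have hL : 0 < (Sl*σl/Dl)*E := by
    apply mul_pos _ hE
    exact div_pos (mul_pos hSl hσl0) hDl0
  have hV : 0 < (S*σv/Dv)*E := by
    apply mul_pos _ hE
    exact div_pos (mul_pos hS hσv0) hDv0
  rw [hKl2] at hbl2
  rw [hKr2] at hcr2
  have hG' : (a*a + (E*(a*a) - b*Kl - c*Kr)*((S*σv/Dv)*E)) * ((Sl*σl/Dl)*E) ≤ 0 := by
    nlinarith [mul_le_mul_of_nonneg_left k1 (le_of_lt (mul_pos hE ha2)),
      mul_le_mul_of_nonneg_left hbl2 hV.le,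
      mul_le_mul_of_nonneg_left hcr2 (mul_nonneg hV.le hL.le)]
  have h0 : (a*a + (E*(a*a) - b*Kl - c*Kr)*((S*σv/Dv)*E)) ≤ 0 := by
    have := le_of_mul_le_mul_right
      (by linarith : (a*a + (E*(a*a) - b*Kl - c*Kr)*((S*σv/Dv)*E)) * ((Sl*σl/Dl)*E) ≤ 0 * ((Sl*σl/Dl)*E)) hL
    linarith
  rw [hPa]
  linarith

end Helpers


/-- A finite rooted tree in which every internal vertex has one or two children, with a
real amplitude `a_v` attached to every vertex. -/
inductive RTree : Type where
  | leaf (a : ℝ)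
  | node1 (a : ℝ) (t : RTree)
  | node2 (a : ℝ) (l r : RTree)

namespace RTree

/-- The amplitude at the root. -/
def val : RTree → ℝ
  | leaf a => a
  | node1 a _ => a
  | node2 a _ _ => a

/-- `s_v`: the number of leaves below a vertex. -/
def size : RTree → ℕ
  | leaf _ => 1
  | node1 _ t => t.size
  | node2 _ l r => l.size + r.size

/-- The NAND evaluation of the tree with every leaf assigned value `0`:
an internal vertex has value `0` iff every child has value `1`. -/
def nand : RTree → Bool
  | leaf _ => false
  | node1 _ t => !t.nand
  | node2 _ l r => !(l.nand && r.nand)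

/-- `σ_-(v)`: the maximum over simple downward paths `ξ` from `v` to a leaf of
`Σ_{w ∈ ξ} 1/√(s_w)`. -/
def sig : RTree → ℝ
  | leaf _ => 1
  | node1 a t => 1 / Real.sqrt ((node1 a t).size) + t.sig
  | node2 a l r => 1 / Real.sqrt ((node2 a l r).size) + max l.sig r.sig

/-- The edge weight `h_{pv} = (s_v/s_p)^{1/4}` from a vertex of size `sp` to a child of
size `sv`. -/
def hwt (sv sp : ℕ) : ℝ := ((sv : ℝ) / (sp : ℝ)) ^ ((1 : ℝ)/4)

/-- The eigenvalue-`E` equations `E a_v = h_{pv} a_p + Σ_c h_{vc} a_c` at every vertex of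
the tree, where `ap` is the parent's amplitude and `hp` the weight of the parent edge. -/
def Eqns (E : ℝ) : ℝ → ℝ → RTree → Prop
  | ap, hp, leaf a => E * a = hp * ap
  | ap, hp, node1 a t =>
      E * a = hp * ap + hwt t.size (node1 a t).size * t.val ∧
      Eqns E a (hwt t.size (node1 a t).size) t
  | ap, hp, node2 a l r =>
      E * a = hp * ap + hwt l.size (node2 a l r).size * l.val
                + hwt r.size (node2 a l r).size * r.val ∧
      Eqns E a (hwt l.size (node2 a l r).size) l ∧
      Eqns E a (hwt r.size (node2 a l r).size) r

/-- The conclusion at a single vertex `v` (the root of `t`), with parent amplitude `ap`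
and parent edge weight `hp`: either `a_v = a_p = 0`, or, with
`γ_v = 4 σ_-² s_v σ_-(v)` and `y_v = √(s_v)·σ_-(v)/(1 − γ_v E²)`:
if `NAND(v) = 0` then `0 < (h_{pv} a_p)/a_v ≤ y_v E`, and
if `NAND(v) = 1` then `0 > a_v/(h_{pv} a_p) ≥ −y_v E`. -/
def Loc (E σglob : ℝ) (ap hp : ℝ) (t : RTree) : Prop :=
  let γ : ℝ := 4 * σglob ^ 2 * t.size * t.sig
  let y : ℝ := Real.sqrt t.size * t.sig / (1 - γ * E ^ 2)
  (t.val = 0 ∧ ap = 0) ∨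
    (if t.nand then
      ap ≠ 0 ∧ t.val / (hp * ap) < 0 ∧ -(y * E) ≤ t.val / (hp * ap)
    else
      t.val ≠ 0 ∧ 0 < hp * ap / t.val ∧ hp * ap / t.val ≤ y * E)

/-- The conclusion at every vertex of the tree. -/
def Concl (E σglob : ℝ) : ℝ → ℝ → RTree → Prop
  | ap, hp, leaf a => Loc E σglob ap hp (leaf a)
  | ap, hp, node1 a t =>
      Loc E σglob ap hp (node1 a t) ∧
      Concl E σglob a (hwt t.size (node1 a t).size) t
  | ap, hp, node2 a l r =>
      Loc E σglob ap hp (node2 a l r) ∧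
      Concl E σglob a (hwt l.size (node2 a l r).size) l ∧
      Concl E σglob a (hwt r.size (node2 a l r).size) r

end RTree

namespace RTree

-- ### auxiliary lemmas

lemma size_pos (t : RTree) : 0 < t.size := by
  induction t with
  | leaf a => simp [size]
  | node1 a t ih => simpa [size] using ih
  | node2 a l r ihl ihr => simp only [size]; omega

lemma one_le_sig (t : RTree) : 1 ≤ t.sig := by
  induction t with
  | leaf a => simp [sig]
  | node1 a t ih =>
      have : (0:ℝ) ≤ 1 / Real.sqrt ((node1 a t).size) := by positivity
      simp only [sig]; linarith
  | node2 a l r ihl ihr =>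
      have h0 : (0:ℝ) ≤ 1 / Real.sqrt ((node2 a l r).size) := by positivity
      have := le_max_left l.sig r.sig
      simp only [sig]; linarith

lemma hwt_pos {sv sp : ℕ} (hv : 0 < sv) (hp : 0 < sp) : 0 < hwt sv sp := by
  unfold hwt
  apply Real.rpow_pos_of_pos
  positivity

lemma hwt_sq {sv sp : ℕ} (hv : 0 < sv) (hp : 0 < sp) :
    hwt sv sp ^ 2 = Real.sqrt (sv : ℝ) / Real.sqrt (sp : ℝ) := by
  unfold hwt
  rw [← Real.rpow_natCast (((sv:ℝ)/(sp:ℝ)) ^ ((1:ℝ)/4)) 2, ← Real.rpow_mul (by positivity)]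
  norm_num
  rw [← Real.sqrt_eq_rpow, Real.sqrt_div' _ (by positivity)]

/-- `y_v` as a function. -/
def yy (σ E : ℝ) (t : RTree) : ℝ :=
  Real.sqrt (t.size:ℝ) * t.sig / (1 - 4*σ^2*(t.size:ℝ)*t.sig*E^2)

lemma loc_iff (E σ ap hp : ℝ) (t : RTree) :
    Loc E σ ap hp t ↔
      ((t.val = 0 ∧ ap = 0) ∨
        (if t.nand then ap ≠ 0 ∧ t.val / (hp * ap) < 0 ∧ -(yy σ E t * E) ≤ t.val / (hp * ap)
         else t.val ≠ 0 ∧ 0 < hp * ap / t.val ∧ hp * ap / t.val ≤ yy σ E t * E)) := Iff.rfl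

lemma concl_loc {E σ ap hp : ℝ} {t : RTree} (h : Concl E σ ap hp t) : Loc E σ ap hp t := by
  cases t with
  | leaf a => exact h
  | node1 a t => exact h.1
  | node2 a l r => exact h.1

lemma loc_build_zero {E σ ap hp : ℝ} {t : RTree} (h1 : t.val = 0) (h2 : ap = 0) :
    Loc E σ ap hp t := (loc_iff E σ ap hp t).mpr (Or.inl ⟨h1, h2⟩)

lemma loc_build_true {E σ ap hp : ℝ} {t : RTree} (hn : t.nand = true) (h1 : ap ≠ 0)
    (h2 : t.val/(hp*ap) < 0) (h3 : -(yy σ E t*E) ≤ t.val/(hp*ap)) : Loc E σ ap hp t := by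
  rw [loc_iff, hn]
  exact Or.inr (by simp only [if_true]; exact ⟨h1, h2, h3⟩)

lemma loc_build_false {E σ ap hp : ℝ} {t : RTree} (hn : t.nand = false) (h1 : t.val ≠ 0)
    (h2 : 0 < hp*ap/t.val) (h3 : hp*ap/t.val ≤ yy σ E t*E) : Loc E σ ap hp t := by
  rw [loc_iff, hn]
  exact Or.inr (by simp only [Bool.false_eq_true, if_false]; exact ⟨h1, h2, h3⟩)

lemma loc_val_zero {E σ a hw : ℝ} {t : RTree} (h : Loc E σ a hw t) (ha : a = 0) :
    t.val = 0 := by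
  rcases (loc_iff E σ a hw t).mp h with ⟨h1, _⟩ | h
  · exact h1
  · subst ha
    cases hn : t.nand with
    | true =>
        rw [hn, if_pos rfl] at h
        exact absurd rfl h.1
    | false =>
        rw [hn] at h
        simp only [Bool.false_eq_true, if_false] at h
        have := h.2.1
        rw [mul_zero, zero_div] at this
        exact absurd this (lt_irrefl 0)

lemma loc_true_extract {E σ a hw : ℝ} {t : RTree} (h : Loc E σ a hw t) (ha : a ≠ 0)
    (hw0 : hw ≠ 0) (hn : t.nand = true) :
    t.val*(hw*a) < 0 ∧ -(yy σ E t*E)*((hw*a)*(hw*a)) ≤ t.val*(hw*a) := by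
  rcases (loc_iff E σ a hw t).mp h with ⟨_, h0⟩ | h
  · exact absurd h0 ha
  · rw [hn, if_pos rfl] at h
    exact ratio_true_prod _ _ _ _ h.2.1 h.2.2 (mul_ne_zero hw0 ha)

lemma loc_false_extract {E σ a hw : ℝ} {t : RTree} (h : Loc E σ a hw t) (ha : a ≠ 0)
    (hw0 : hw ≠ 0) (hn : t.nand = false) :
    0 < (hw*a)*t.val ∧ (hw*a)*(hw*a) ≤ ((hw*a)*t.val)*(yy σ E t*E) := by
  rcases (loc_iff E σ a hw t).mp h with ⟨_, h0⟩ | h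
  · exact absurd h0 ha
  · rw [hn] at h
    simp only [Bool.false_eq_true, if_false] at h
    exact ratio_false_prod _ _ _ _ h.1 h.2.1 h.2.2



lemma main_ind (σ n E : ℝ) (hσ : 1 ≤ σ) (hE : 0 < E) (hEb : 8*σ^3*n*E^2 ≤ 1) :
    ∀ t : RTree, (t.size:ℝ) ≤ n → t.sig ≤ σ → ∀ ap hp : ℝ, hp ≠ 0 → Eqns E ap hp t →
      Concl E σ ap hp t := by
  intro t
  induction t with
  | leaf a =>
    intro hsize hsig ap hp hhp heq
    simp only [Eqns] at heq
    have hn1 : (1:ℝ) ≤ n := le_trans (by norm_num [size]) hsize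
    show Loc E σ ap hp (leaf a)
    by_cases ha : a = 0
    · refine loc_build_zero ha ?_
      rw [ha, mul_zero] at heq
      exact (mul_eq_zero.mp heq.symm).resolve_left hhp
    · have hnv : (leaf a).nand = false := rfl
      have hD : 4*σ^2*E^2 ≤ 1/2 := by
        linarith [hEb, mul_nonneg (mul_nonneg (by positivity : (0:ℝ) ≤ 8*E^2) (sq_nonneg σ))
          (by nlinarith : (0:ℝ) ≤ σ*n - 1)]
      have hyv : yy σ E (leaf a) = 1/(1 - 4*σ^2*E^2) := by
        simp [yy, size, sig]
      have hrat : hp*ap/a = E := by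
        rw [← heq, mul_div_assoc, div_self ha, mul_one]
      refine loc_build_false hnv ha ?_ ?_
      · show 0 < hp*ap/a
        rw [hrat]; exact hE
      · show hp*ap/a ≤ yy σ E (leaf a) * E
        rw [hrat, hyv]
        have h1 : 1 ≤ 1/(1 - 4*σ^2*E^2) := by
          rw [le_div_iff₀ (by linarith)]; linarith [mul_nonneg (sq_nonneg σ) (sq_nonneg E)]
        nlinarith [h1, hE]
  | node1 a t ih =>
    intro hsize hsig ap hp hhp heq
    obtain ⟨heqv, heqc⟩ := heq
    have hst1 : (1:ℝ) ≤ (t.size:ℝ) := by exact_mod_cast size_pos t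
    have hstpos : (0:ℝ) < (t.size:ℝ) := by linarith
    have hSpos : 0 < Real.sqrt (t.size:ℝ) := Real.sqrt_pos.mpr hstpos
    have hSS : ((t.size:ℝ)) = Real.sqrt (t.size:ℝ) * Real.sqrt (t.size:ℝ) :=
      (Real.mul_self_sqrt hstpos.le).symm
    have hσl1 : 1 ≤ t.sig := one_le_sig t
    have hσ0 : (0:ℝ) < σ := by linarith
    have hsigv : (node1 a t).sig = 1/Real.sqrt (t.size:ℝ) + t.sig := rfl
    have hsizet : ((t.size:ℝ)) ≤ n := hsize
    have hn0 : (0:ℝ) ≤ n := by linarith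
    have hiS : 0 < 1/Real.sqrt (t.size:ℝ) := by positivity
    have hσvσ : 1/Real.sqrt (t.size:ℝ) + t.sig ≤ σ := by rw [← hsigv]; exact hsig
    have hsigt : t.sig ≤ σ := by linarith
    have hwpos : 0 < hwt t.size (node1 a t).size := hwt_pos (size_pos t) (size_pos (node1 a t))
    have hw0 : hwt t.size (node1 a t).size ≠ 0 := ne_of_gt hwpos
    have hwsq : hwt t.size (node1 a t).size ^ 2
        = Real.sqrt (t.size:ℝ)/Real.sqrt (t.size:ℝ) := hwt_sq (size_pos t) (size_pos (node1 a t))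
    have hCt : Concl E σ a (hwt t.size (node1 a t).size) t := ih hsizet hsigt a _ hw0 heqc
    have hLt := concl_loc hCt
    have hloc : Loc E σ ap hp (node1 a t) := by
      by_cases ha : a = 0
      · have hb : t.val = 0 := loc_val_zero hLt ha
        refine loc_build_zero ha ?_
        rw [ha, hb, mul_zero] at heqv
        have : hp*ap = 0 := by linarith
        exact (mul_eq_zero.mp this).resolve_left hhp
      · have ha2 : 0 < a*a := mul_self_pos.mpr ha
        have hDl : 1/2 ≤ 1 - 4*σ^2*(t.size:ℝ)*t.sig*E^2 := by
          have d1 : ((t.size:ℝ))*t.sig ≤ n*σ := mul_le_mul hsizet hsigt (by linarith) hn0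
          linarith [hEb, mul_nonneg (mul_nonneg (by positivity : (0:ℝ) ≤ 4*σ^2) (sq_nonneg E))
            (sub_nonneg.mpr d1)]
        have hDv : 1/2 ≤ 1 - 4*σ^2*(t.size:ℝ)*(1/Real.sqrt (t.size:ℝ) + t.sig)*E^2 := by
          have d1 : ((t.size:ℝ))*(1/Real.sqrt (t.size:ℝ) + t.sig) ≤ n*σ :=
            mul_le_mul hsizet hσvσ (by positivity) hn0
          linarith [hEb, mul_nonneg (mul_nonneg (by positivity : (0:ℝ) ≤ 4*σ^2) (sq_nonneg E))
            (sub_nonneg.mpr d1)]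
        have hyyt : yy σ E t
            = Real.sqrt (t.size:ℝ)*t.sig/(1 - 4*σ^2*(t.size:ℝ)*t.sig*E^2) := rfl
        have hyv : yy σ E (node1 a t)
            = Real.sqrt (t.size:ℝ)*(1/Real.sqrt (t.size:ℝ) + t.sig)
              /(1 - 4*σ^2*(t.size:ℝ)*(1/Real.sqrt (t.size:ℝ) + t.sig)*E^2) := rfl
        have hKl2 : (hwt t.size (node1 a t).size*a)*(hwt t.size (node1 a t).size*a)
            = (Real.sqrt (t.size:ℝ)/Real.sqrt (t.size:ℝ))*(a*a) := by
          rw [← hwsq]; ring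
        have hPa : (hp*ap)*a = E*(a*a) - t.val*(hwt t.size (node1 a t).size*a) - 0*0 := by
          linear_combination (-a)*heqv
        have hσv : Real.sqrt (t.size:ℝ)*(1/Real.sqrt (t.size:ℝ) + t.sig)
            = 1 + Real.sqrt (t.size:ℝ)*t.sig := by field_simp
        cases hnt : t.nand with
        | true =>
          have hnv : (node1 a t).nand = false := by simp [nand, hnt]
          obtain ⟨hx1, hx2⟩ := loc_true_extract hLt ha hw0 hnt
          rw [hyyt] at hx2
          obtain ⟨hc1, hc2⟩ := core_false σ E (Real.sqrt (t.size:ℝ)) (Real.sqrt (t.size:ℝ)) 0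
            ((t.size:ℝ)) 0 ((t.size:ℝ)) t.sig 0 t.sig (1/Real.sqrt (t.size:ℝ) + t.sig)
            (1 - 4*σ^2*(t.size:ℝ)*t.sig*E^2) (1 - 4*σ^2*0*0*E^2)
            (1 - 4*σ^2*(t.size:ℝ)*(1/Real.sqrt (t.size:ℝ) + t.sig)*E^2)
            a t.val 0 (hp*ap) (hwt t.size (node1 a t).size*a) 0
            hE hSS (by ring) hSS (by ring) hSpos hSpos le_rfl (by linarith) le_rfl le_rfl
            (by linarith) hσv (by linarith) (by linarith) rfl rfl rfl hDl (by norm_num) hDv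
            ha2 hKl2 (by ring) hPa (le_of_lt hx1) (by norm_num)
            (by linarith) (by norm_num)
          obtain ⟨g1, g2⟩ := loc_false_concl (hp*ap) a (yy σ E (node1 a t)*E) ha hc1
            (by rw [hyv]; exact hc2)
          exact loc_build_false hnv ha g1 g2
        | false =>
          have hnv : (node1 a t).nand = true := by simp [nand, hnt]
          obtain ⟨hx1, hx2⟩ := loc_false_extract hLt ha hw0 hnt
          rw [hyyt] at hx2
          have hE1 : ((t.size:ℝ))*t.sig*(1/Real.sqrt (t.size:ℝ) + t.sig)*E^2 ≤ 1 := by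
            have d1 : ((t.size:ℝ))*t.sig ≤ n*σ := mul_le_mul hsizet hsigt (by linarith) hn0
            have d2 : ((t.size:ℝ))*t.sig*(1/Real.sqrt (t.size:ℝ) + t.sig) ≤ (n*σ)*σ :=
              mul_le_mul d1 hσvσ (by positivity) (mul_nonneg hn0 (by linarith))
            linarith [hEb, mul_le_mul_of_nonneg_right d2 (sq_nonneg E),
              mul_nonneg (mul_nonneg (mul_nonneg hn0 (by positivity : (0:ℝ) ≤ σ^2))
                (by linarith : (0:ℝ) ≤ σ - 1)) (sq_nonneg E)]
          have hσv0 : 0 < 1/Real.sqrt (t.size:ℝ) + t.sig := by positivity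
          have hkey := core_true σ E (Real.sqrt (t.size:ℝ)) (Real.sqrt (t.size:ℝ)) 0
            ((t.size:ℝ)) 0 ((t.size:ℝ)) t.sig 0 t.sig (1/Real.sqrt (t.size:ℝ) + t.sig)
            (1 - 4*σ^2*(t.size:ℝ)*t.sig*E^2) (1 - 4*σ^2*0*0*E^2)
            (1 - 4*σ^2*(t.size:ℝ)*(1/Real.sqrt (t.size:ℝ) + t.sig)*E^2)
            a t.val 0 (hp*ap) (hwt t.size (node1 a t).size*a) 0
            hσ hE hSS (by ring) hSS (by ring) hSpos hSpos le_rfl (by linarith) le_rfl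
            le_rfl hσv (by linarith) (by linarith) rfl rfl rfl hDl (by norm_num) hDv hE1 hσv0
            ha2 hKl2 (by ring) hPa hx1 hx2 (by norm_num)
          have hyvE : 0 < yy σ E (node1 a t)*E := by
            rw [hyv]
            apply mul_pos _ hE
            exact div_pos (mul_pos hSpos hσv0) (by linarith)
          obtain ⟨g1, g2, g3⟩ := loc_true_concl (hp*ap) a (yy σ E (node1 a t)*E) ha hyvE
            (by rw [hyv]; exact hkey)
          have hap : ap ≠ 0 := fun h => g1 (by rw [h, mul_zero])
          exact loc_build_true hnv hap g2 g3
    exact ⟨hloc, hCt⟩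
  | node2 a l r ihl ihr =>
    intro hsize hsig ap hp hhp heq
    obtain ⟨heqv, heql, heqr⟩ := heq
    have hsl1 : (1:ℝ) ≤ (l.size:ℝ) := by exact_mod_cast size_pos l
    have hsr1 : (1:ℝ) ≤ (r.size:ℝ) := by exact_mod_cast size_pos r
    have hslpos : (0:ℝ) < (l.size:ℝ) := by linarith
    have hsrpos : (0:ℝ) < (r.size:ℝ) := by linarith
    have hsvpos : (0:ℝ) < (l.size:ℝ)+(r.size:ℝ) := by linarith
    have hSlpos : 0 < Real.sqrt (l.size:ℝ) := Real.sqrt_pos.mpr hslpos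
    have hSrpos : 0 < Real.sqrt (r.size:ℝ) := Real.sqrt_pos.mpr hsrpos
    have hSpos : 0 < Real.sqrt ((l.size:ℝ)+(r.size:ℝ)) := Real.sqrt_pos.mpr hsvpos
    have hSlsq : ((l.size:ℝ)) = Real.sqrt (l.size:ℝ) * Real.sqrt (l.size:ℝ) := (Real.mul_self_sqrt hslpos.le).symm
    have hSrsq : ((r.size:ℝ)) = Real.sqrt (r.size:ℝ) * Real.sqrt (r.size:ℝ) := (Real.mul_self_sqrt hsrpos.le).symm
    have hSsq : ((l.size:ℝ)+(r.size:ℝ)) = Real.sqrt ((l.size:ℝ)+(r.size:ℝ)) * Real.sqrt ((l.size:ℝ)+(r.size:ℝ)) := (Real.mul_self_sqrt hsvpos.le).symm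
    have hσl1 : 1 ≤ l.sig := one_le_sig l
    have hσr1 : 1 ≤ r.sig := one_le_sig r
    have hσ0 : (0:ℝ) < σ := by linarith
    have hml : l.sig ≤ max l.sig r.sig := le_max_left _ _
    have hmr : r.sig ≤ max l.sig r.sig := le_max_right _ _
    have hiS : 0 < 1/Real.sqrt ((l.size:ℝ)+(r.size:ℝ)) := by positivity
    have hcast : (((node2 a l r).size : ℕ) : ℝ) = (l.size:ℝ)+(r.size:ℝ) := by
      show (((l.size + r.size : ℕ)) : ℝ) = _
      push_cast; ring
    have hsigv : (node2 a l r).sig = 1/Real.sqrt ((l.size:ℝ)+(r.size:ℝ)) + max l.sig r.sig := by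
      rw [show (node2 a l r).sig
        = 1/Real.sqrt (((node2 a l r).size : ℕ) : ℝ) + max l.sig r.sig from rfl, hcast]
    rw [hcast] at hsize
    rw [hsigv] at hsig
    have hσvσ : 1/Real.sqrt ((l.size:ℝ)+(r.size:ℝ)) + max l.sig r.sig ≤ σ := hsig
    have hσlσ : l.sig ≤ σ := by linarith
    have hσrσ : r.sig ≤ σ := by linarith
    have hn0 : (0:ℝ) ≤ n := by linarith
    have hslN : (l.size:ℝ) ≤ n := by linarith
    have hsrN : (r.size:ℝ) ≤ n := by linarith
    have hwlpos : 0 < hwt l.size (node2 a l r).size := hwt_pos (size_pos l) (size_pos (node2 a l r))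
    have hwrpos : 0 < hwt r.size (node2 a l r).size := hwt_pos (size_pos r) (size_pos (node2 a l r))
    have hwl0 : hwt l.size (node2 a l r).size ≠ 0 := ne_of_gt hwlpos
    have hwr0 : hwt r.size (node2 a l r).size ≠ 0 := ne_of_gt hwrpos
    have hwlsq : hwt l.size (node2 a l r).size ^ 2 = Real.sqrt (l.size:ℝ)/Real.sqrt ((l.size:ℝ)+(r.size:ℝ)) := by
      have h := hwt_sq (size_pos l) (size_pos (node2 a l r))
      rwa [hcast] at h
    have hwrsq : hwt r.size (node2 a l r).size ^ 2 = Real.sqrt (r.size:ℝ)/Real.sqrt ((l.size:ℝ)+(r.size:ℝ)) := by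
      have h := hwt_sq (size_pos r) (size_pos (node2 a l r))
      rwa [hcast] at h
    have hCl : Concl E σ a (hwt l.size (node2 a l r).size) l := ihl hslN hσlσ a _ hwl0 heql
    have hCr : Concl E σ a (hwt r.size (node2 a l r).size) r := ihr hsrN hσrσ a _ hwr0 heqr
    have hLl := concl_loc hCl
    have hLr := concl_loc hCr
    have hloc : Loc E σ ap hp (node2 a l r) := by
      by_cases ha : a = 0
      · have hbz : l.val = 0 := loc_val_zero hLl ha
        have hcz : r.val = 0 := loc_val_zero hLr ha
        refine loc_build_zero ha ?_
        rw [ha, hbz, hcz, mul_zero, mul_zero] at heqv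
        have : hp*ap = 0 := by linarith
        exact (mul_eq_zero.mp this).resolve_left hhp
      · have ha2 : 0 < a*a := mul_self_pos.mpr ha
        have hDl : 1/2 ≤ (1 - 4*σ^2*(l.size:ℝ)*l.sig*E^2) := by
          have d1 : ((l.size:ℝ))*l.sig ≤ n*σ := mul_le_mul hslN hσlσ (by linarith) hn0
          linarith [hEb, mul_nonneg (mul_nonneg (by positivity : (0:ℝ) ≤ 4*σ^2) (sq_nonneg E))
            (sub_nonneg.mpr d1)]
        have hDr : 1/2 ≤ (1 - 4*σ^2*(r.size:ℝ)*r.sig*E^2) := by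
          have d1 : ((r.size:ℝ))*r.sig ≤ n*σ := mul_le_mul hsrN hσrσ (by linarith) hn0
          linarith [hEb, mul_nonneg (mul_nonneg (by positivity : (0:ℝ) ≤ 4*σ^2) (sq_nonneg E))
            (sub_nonneg.mpr d1)]
        have hDv : 1/2 ≤ (1 - 4*σ^2*((l.size:ℝ)+(r.size:ℝ))*(1/Real.sqrt ((l.size:ℝ)+(r.size:ℝ)) + max l.sig r.sig)*E^2) := by
          have d1 : ((l.size:ℝ)+(r.size:ℝ))*(1/Real.sqrt ((l.size:ℝ)+(r.size:ℝ)) + max l.sig r.sig) ≤ n*σ :=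
            mul_le_mul hsize hσvσ (by positivity) hn0
          linarith [hEb, mul_nonneg (mul_nonneg (by positivity : (0:ℝ) ≤ 4*σ^2) (sq_nonneg E))
            (sub_nonneg.mpr d1)]
        have hyyl : yy σ E l = Real.sqrt (l.size:ℝ)*l.sig/(1 - 4*σ^2*(l.size:ℝ)*l.sig*E^2) := rfl
        have hyyr : yy σ E r = Real.sqrt (r.size:ℝ)*r.sig/(1 - 4*σ^2*(r.size:ℝ)*r.sig*E^2) := rfl
        have hyv : yy σ E (node2 a l r) = Real.sqrt ((l.size:ℝ)+(r.size:ℝ))*(1/Real.sqrt ((l.size:ℝ)+(r.size:ℝ)) + max l.sig r.sig)/(1 - 4*σ^2*((l.size:ℝ)+(r.size:ℝ))*(1/Real.sqrt ((l.size:ℝ)+(r.size:ℝ)) + max l.sig r.sig)*E^2) := by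
          rw [show yy σ E (node2 a l r) = Real.sqrt (((node2 a l r).size : ℕ):ℝ)
              * (node2 a l r).sig
              / (1 - 4*σ^2*(((node2 a l r).size : ℕ):ℝ)*(node2 a l r).sig*E^2) from rfl,
            hcast, hsigv]
        have hKl2 : (hwt l.size (node2 a l r).size*a)*(hwt l.size (node2 a l r).size*a) = (Real.sqrt (l.size:ℝ)/Real.sqrt ((l.size:ℝ)+(r.size:ℝ)))*(a*a) := by rw [← hwlsq]; ring
        have hKr2 : (hwt r.size (node2 a l r).size*a)*(hwt r.size (node2 a l r).size*a) = (Real.sqrt (r.size:ℝ)/Real.sqrt ((l.size:ℝ)+(r.size:ℝ)))*(a*a) := by rw [← hwrsq]; ring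
        have hPa : (hp*ap)*a = E*(a*a) - l.val*(hwt l.size (node2 a l r).size*a) - r.val*(hwt r.size (node2 a l r).size*a) := by
          linear_combination (-a)*heqv
        have hPa' : (hp*ap)*a = E*(a*a) - r.val*(hwt r.size (node2 a l r).size*a) - l.val*(hwt l.size (node2 a l r).size*a) := by
          linear_combination (-a)*heqv
        have hσv : Real.sqrt ((l.size:ℝ)+(r.size:ℝ))*(1/Real.sqrt ((l.size:ℝ)+(r.size:ℝ)) + max l.sig r.sig) = 1 + Real.sqrt ((l.size:ℝ)+(r.size:ℝ))*max l.sig r.sig := by field_simp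
        have hσlv : l.sig ≤ 1/Real.sqrt ((l.size:ℝ)+(r.size:ℝ)) + max l.sig r.sig := by linarith
        have hσrv : r.sig ≤ 1/Real.sqrt ((l.size:ℝ)+(r.size:ℝ)) + max l.sig r.sig := by linarith
        have hσv0 : 0 < 1/Real.sqrt ((l.size:ℝ)+(r.size:ℝ)) + max l.sig r.sig := by linarith
        have hyvE : 0 < yy σ E (node2 a l r)*E := by
          rw [hyv]
          exact mul_pos (div_pos (mul_pos hSpos hσv0) (by linarith)) hE
        cases hnl : l.nand with
        | false =>
          have hnv : (node2 a l r).nand = true := by simp [nand, hnl]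
          obtain ⟨hx1, hx2⟩ := loc_false_extract hLl ha hwl0 hnl
          rw [hyyl] at hx2
          have hcr2 : -(r.val*(hwt r.size (node2 a l r).size*a)) ≤ ((Real.sqrt (r.size:ℝ)*r.sig/(1 - 4*σ^2*(r.size:ℝ)*r.sig*E^2))*E)*((hwt r.size (node2 a l r).size*a)*(hwt r.size (node2 a l r).size*a)) := by
            cases hnr : r.nand with
            | true =>
              obtain ⟨hy1, hy2⟩ := loc_true_extract hLr ha hwr0 hnr
              rw [hyyr] at hy2
              linarith
            | false =>
              obtain ⟨hy1, hy2⟩ := loc_false_extract hLr ha hwr0 hnr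
              refine le_trans (show -(r.val*(hwt r.size (node2 a l r).size*a)) ≤ 0 by linarith) ?_
              exact mul_nonneg (mul_nonneg (div_nonneg (mul_nonneg hSrpos.le (by linarith))
                (by linarith)) hE.le) (mul_self_nonneg _)
          have hE1 : ((l.size:ℝ)+(r.size:ℝ))*l.sig*(1/Real.sqrt ((l.size:ℝ)+(r.size:ℝ)) + max l.sig r.sig)*E^2 ≤ 1 := by
            have d1 : ((l.size:ℝ)+(r.size:ℝ))*l.sig ≤ n*σ := mul_le_mul hsize hσlσ (by linarith) hn0
            have d2 : ((l.size:ℝ)+(r.size:ℝ))*l.sig*(1/Real.sqrt ((l.size:ℝ)+(r.size:ℝ)) + max l.sig r.sig) ≤ (n*σ)*σ :=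
              mul_le_mul d1 hσvσ (by positivity) (mul_nonneg hn0 (by linarith))
            linarith [hEb, mul_le_mul_of_nonneg_right d2 (sq_nonneg E),
              mul_nonneg (mul_nonneg (mul_nonneg hn0 (by positivity : (0:ℝ) ≤ σ^2))
                (by linarith : (0:ℝ) ≤ σ - 1)) (sq_nonneg E)]
          have hkey := core_true σ E (Real.sqrt ((l.size:ℝ)+(r.size:ℝ))) (Real.sqrt (l.size:ℝ)) (Real.sqrt (r.size:ℝ))
            ((l.size:ℝ)) ((r.size:ℝ)) ((l.size:ℝ)+(r.size:ℝ)) l.sig r.sig (max l.sig r.sig) ((1/Real.sqrt ((l.size:ℝ)+(r.size:ℝ)) + max l.sig r.sig))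
            (1 - 4*σ^2*(l.size:ℝ)*l.sig*E^2) (1 - 4*σ^2*(r.size:ℝ)*r.sig*E^2) (1 - 4*σ^2*((l.size:ℝ)+(r.size:ℝ))*(1/Real.sqrt ((l.size:ℝ)+(r.size:ℝ)) + max l.sig r.sig)*E^2)
            a l.val r.val (hp*ap) (hwt l.size (node2 a l r).size*a) (hwt r.size (node2 a l r).size*a)
            hσ hE hSlsq hSrsq hSsq (by ring) hSpos hSlpos hSrpos.le (by linarith) (by linarith)
            hml hσv hσlv hσrσ rfl rfl rfl hDl hDr hDv hE1 hσv0
            ha2 hKl2 hKr2 hPa hx1 hx2 hcr2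
          obtain ⟨g1, g2, g3⟩ := loc_true_concl (hp*ap) a (yy σ E (node2 a l r)*E) ha hyvE
            (by rw [hyv]; exact hkey)
          have hap : ap ≠ 0 := fun h => g1 (by rw [h, mul_zero])
          exact loc_build_true hnv hap g2 g3
        | true =>
          cases hnr : r.nand with
          | false =>
            have hnv : (node2 a l r).nand = true := by simp [nand, hnr]
            obtain ⟨hx1, hx2⟩ := loc_false_extract hLr ha hwr0 hnr
            rw [hyyr] at hx2
            have hcl2 : -(l.val*(hwt l.size (node2 a l r).size*a)) ≤ ((Real.sqrt (l.size:ℝ)*l.sig/(1 - 4*σ^2*(l.size:ℝ)*l.sig*E^2))*E)*((hwt l.size (node2 a l r).size*a)*(hwt l.size (node2 a l r).size*a)) := by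
              obtain ⟨hy1, hy2⟩ := loc_true_extract hLl ha hwl0 hnl
              rw [hyyl] at hy2
              linarith
            have hE1 : ((l.size:ℝ)+(r.size:ℝ))*r.sig*(1/Real.sqrt ((l.size:ℝ)+(r.size:ℝ)) + max l.sig r.sig)*E^2 ≤ 1 := by
              have d1 : ((l.size:ℝ)+(r.size:ℝ))*r.sig ≤ n*σ := mul_le_mul hsize hσrσ (by linarith) hn0
              have d2 : ((l.size:ℝ)+(r.size:ℝ))*r.sig*(1/Real.sqrt ((l.size:ℝ)+(r.size:ℝ)) + max l.sig r.sig) ≤ (n*σ)*σ :=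
                mul_le_mul d1 hσvσ (by positivity) (mul_nonneg hn0 (by linarith))
              linarith [hEb, mul_le_mul_of_nonneg_right d2 (sq_nonneg E),
                mul_nonneg (mul_nonneg (mul_nonneg hn0 (by positivity : (0:ℝ) ≤ σ^2))
                  (by linarith : (0:ℝ) ≤ σ - 1)) (sq_nonneg E)]
            have hkey := core_true σ E (Real.sqrt ((l.size:ℝ)+(r.size:ℝ))) (Real.sqrt (r.size:ℝ)) (Real.sqrt (l.size:ℝ))
              ((r.size:ℝ)) ((l.size:ℝ)) ((l.size:ℝ)+(r.size:ℝ)) r.sig l.sig (max l.sig r.sig) ((1/Real.sqrt ((l.size:ℝ)+(r.size:ℝ)) + max l.sig r.sig))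
              (1 - 4*σ^2*(r.size:ℝ)*r.sig*E^2) (1 - 4*σ^2*(l.size:ℝ)*l.sig*E^2) (1 - 4*σ^2*((l.size:ℝ)+(r.size:ℝ))*(1/Real.sqrt ((l.size:ℝ)+(r.size:ℝ)) + max l.sig r.sig)*E^2)
              a r.val l.val (hp*ap) (hwt r.size (node2 a l r).size*a) (hwt l.size (node2 a l r).size*a)
              hσ hE hSrsq hSlsq hSsq (by ring) hSpos hSrpos hSlpos.le (by linarith) (by linarith)
              hmr hσv hσrv hσlσ rfl rfl rfl hDr hDl hDv hE1 hσv0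
              ha2 hKr2 hKl2 hPa' hx1 hx2 hcl2
            obtain ⟨g1, g2, g3⟩ := loc_true_concl (hp*ap) a (yy σ E (node2 a l r)*E) ha hyvE
              (by rw [hyv]; exact hkey)
            have hap : ap ≠ 0 := fun h => g1 (by rw [h, mul_zero])
            exact loc_build_true hnv hap g2 g3
          | true =>
            have hnv : (node2 a l r).nand = false := by simp [nand, hnl, hnr]
            obtain ⟨hx1, hx2⟩ := loc_true_extract hLl ha hwl0 hnl
            rw [hyyl] at hx2
            obtain ⟨hy1, hy2⟩ := loc_true_extract hLr ha hwr0 hnr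
            rw [hyyr] at hy2
            obtain ⟨hc1, hc2⟩ := core_false σ E (Real.sqrt ((l.size:ℝ)+(r.size:ℝ))) (Real.sqrt (l.size:ℝ)) (Real.sqrt (r.size:ℝ))
              ((l.size:ℝ)) ((r.size:ℝ)) ((l.size:ℝ)+(r.size:ℝ)) l.sig r.sig (max l.sig r.sig) ((1/Real.sqrt ((l.size:ℝ)+(r.size:ℝ)) + max l.sig r.sig))
              (1 - 4*σ^2*(l.size:ℝ)*l.sig*E^2) (1 - 4*σ^2*(r.size:ℝ)*r.sig*E^2) (1 - 4*σ^2*((l.size:ℝ)+(r.size:ℝ))*(1/Real.sqrt ((l.size:ℝ)+(r.size:ℝ)) + max l.sig r.sig)*E^2)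
              a l.val r.val (hp*ap) (hwt l.size (node2 a l r).size*a) (hwt r.size (node2 a l r).size*a)
              hE hSlsq hSrsq hSsq (by ring) hSpos hSlpos hSrpos.le (by linarith) (by linarith)
              hml hmr hσv hσlv hσrv rfl rfl rfl hDl hDr hDv
              ha2 hKl2 hKr2 hPa (le_of_lt hx1) (le_of_lt hy1) (by linarith) (by linarith)
            obtain ⟨g1, g2⟩ := loc_false_concl (hp*ap) a (yy σ E (node2 a l r)*E) ha hc1
              (by rw [hyv]; exact hc2)
            exact loc_build_false hnv ha g1 g2
    exact ⟨hloc, hCl, hCr⟩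

end RTree

/-- spectral analysis of NAND trees.  If `0 < E ≤ 1/√(8 σ_-³ n)` and
the amplitudes satisfy the eigenvalue equations at every vertex (with arbitrary positive
weight `h0` on the edge from the root `r` of `T₀` to the attached vertex `r''`, carrying
amplitude `a''`), then at every vertex `v ≠ r''` either `a_v = a_p = 0` or the signed
ratio bounds hold as dictated by `NAND(v)`. -/
theorem nand_tree_eigenvector_bounds (T : RTree) (a'' h0 : ℝ) (hh0 : 0 < h0) (E : ℝ)
    (hE1 : 0 < E) (hE2 : E ≤ 1 / Real.sqrt (8 * T.sig ^ 3 * T.size))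
    (heq : RTree.Eqns E a'' h0 T) :
    RTree.Concl E T.sig a'' h0 T := by
  have hσ : 1 ≤ T.sig := RTree.one_le_sig T
  have hn : (1:ℝ) ≤ (T.size:ℝ) := by exact_mod_cast RTree.size_pos T
  have hσ3 : 1 ≤ T.sig^3 := one_le_pow₀ hσ
  have hX : (0:ℝ) < 8 * T.sig ^ 3 * (T.size:ℝ) := by nlinarith
  have hsq := Real.mul_self_sqrt hX.le
  have h1 : 0 < Real.sqrt (8 * T.sig ^ 3 * (T.size:ℝ)) := Real.sqrt_pos.mpr hX
  have h2 : E * Real.sqrt (8 * T.sig ^ 3 * (T.size:ℝ)) ≤ 1 := (le_div_iff₀ h1).mp hE2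
  have h3 := mul_le_mul h2 h2 (mul_nonneg hE1.le h1.le) (by norm_num)
  have h4 : E * Real.sqrt (8 * T.sig ^ 3 * (T.size:ℝ))
      * (E * Real.sqrt (8 * T.sig ^ 3 * (T.size:ℝ)))
      = (Real.sqrt (8 * T.sig ^ 3 * (T.size:ℝ)) * Real.sqrt (8 * T.sig ^ 3 * (T.size:ℝ)))
        * (E*E) := by ring
  rw [hsq] at h4
  have hEb : 8 * T.sig ^ 3 * (T.size:ℝ) * E ^ 2 ≤ 1 := by nlinarith [h3, h4]
  exact RTree.main_ind T.sig (T.size:ℝ) E hσ hE1 hEb T le_rfl le_rfl a'' h0 (ne_of_gt hh0) heq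

end
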